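/- arXiv:2501.13830 — 3 statements merged into one kernel-verified Lean document; each statement's English description precedes it below -/
import Mathlib

section
/- Let X be a stationary point of min f(X) over R_{≤r}^{m×n} ∩ H (where h satisfies the blanket assumption) with rank(X) = s < r. Then −∇f(X) ∈ N_X H, i.e., the negative gradient is orthogonal to ker(Dh_X). -/
open Matrix

noncomputable section
attribute [local instance] Matrix.normedAddCommGroup Matrix.normedSpace

/-- The Bouligand tangent cone of a set `s` at `x`. -/
def bouligandCone {E : Type*} [NormedAddCommGroup E] [NormedSpace ℝ E]
    (s : Set E) (x : E) : Set E :=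
  {y | ∃ (u : ℕ → E) (t : ℕ → ℝ), (∀ k, u k ∈ s) ∧ (∀ k, 0 < t k) ∧
    Filter.Tendsto t Filter.atTop (nhds 0) ∧
    Filter.Tendsto (fun k => (t k)⁻¹ • (u k - x)) Filter.atTop (nhds y)}

/-- The Fréchet normal cone: the polar (w.r.t. the Frobenius inner product) of the
Bouligand tangent cone. -/
def frechetNormalCone {m n : ℕ} (s : Set (Matrix (Fin m) (Fin n) ℝ))
    (x : Matrix (Fin m) (Fin n) ℝ) : Set (Matrix (Fin m) (Fin n) ℝ) :=
  {Y | ∀ Z ∈ bouligandCone s x, (Zᵀ * Y).trace ≤ 0}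

open Filter in
lemma gram_exists {m n : ℕ} (A B : Matrix (Fin m) (Fin n) ℝ) (hAB : A * Aᵀ = B * Bᵀ) :
    ∃ Q : Matrix (Fin n) (Fin n) ℝ, Qᵀ * Q = 1 ∧ A * Q = B := by
  classical
  set e : (Fin n → ℝ) ≃ₗ[ℝ] EuclideanSpace ℝ (Fin n) :=
    (WithLp.linearEquiv 2 ℝ (Fin n → ℝ)).symm with he
  set φ : (Fin m → ℝ) →ₗ[ℝ] EuclideanSpace ℝ (Fin n) := e.toLinearMap ∘ₗ Aᵀ.mulVecLin with hφ
  set ψ : (Fin m → ℝ) →ₗ[ℝ] EuclideanSpace ℝ (Fin n) := e.toLinearMap ∘ₗ Bᵀ.mulVecLin with hψ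
  have happ : ∀ (u : Fin n → ℝ) (i : Fin n), (e u) i = u i := fun u i => rfl
  have hdot : ∀ (M : Matrix (Fin m) (Fin n) ℝ) (x y : Fin m → ℝ),
      (∑ i, (Mᵀ *ᵥ x) i * (Mᵀ *ᵥ y) i) = x ⬝ᵥ ((M * Mᵀ) *ᵥ y) := by
    intro M x y
    rw [← Matrix.mulVec_mulVec]
    rw [show (∑ i, (Mᵀ *ᵥ x) i * (Mᵀ *ᵥ y) i) = (Mᵀ *ᵥ x) ⬝ᵥ (Mᵀ *ᵥ y) from rfl]
    rw [Matrix.mulVec_transpose, ← Matrix.dotProduct_mulVec]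
  have hinner : ∀ x y : Fin m → ℝ, (inner ℝ (φ x) (φ y) : ℝ) = inner ℝ (ψ x) (ψ y) := by
    intro x y
    simp only [hφ, hψ, LinearMap.coe_comp, Function.comp_apply, LinearEquiv.coe_coe,
      Matrix.mulVecLin_apply, PiLp.inner_apply, RCLike.inner_apply, starRingEnd_apply,
      star_trivial, happ]
    rw [hdot A, hdot B, hAB]
  have hnorm : ∀ x : Fin m → ℝ, ‖φ x‖ = ‖ψ x‖ := by
    intro x
    have h1 := hinner x x
    rw [real_inner_self_eq_norm_mul_norm, real_inner_self_eq_norm_mul_norm] at h1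
    exact (mul_self_inj (norm_nonneg _) (norm_nonneg _)).mp h1
  have hker : LinearMap.ker φ ≤ LinearMap.ker ψ := by
    intro x hx
    rw [LinearMap.mem_ker] at hx ⊢
    have := hnorm x
    rw [hx, norm_zero] at this
    exact norm_eq_zero.mp this.symm
  set σ : LinearMap.range φ →ₗ[ℝ] EuclideanSpace ℝ (Fin n) :=
    ((LinearMap.ker φ).liftQ ψ hker) ∘ₗ (φ.quotKerEquivRange.symm : _ →ₗ[ℝ] _) with hσ
  have hσval : ∀ x : Fin m → ℝ, σ ⟨φ x, LinearMap.mem_range_self φ x⟩ = ψ x := by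
    intro x
    rw [hσ]
    simp only [LinearMap.coe_comp, Function.comp_apply, LinearEquiv.coe_coe]
    rw [LinearMap.quotKerEquivRange_symm_apply_image]
    simp [Submodule.liftQ_apply]
  set L : LinearMap.range φ →ₗᵢ[ℝ] EuclideanSpace ℝ (Fin n) :=
    ⟨σ, by rintro ⟨v, x, rfl⟩; rw [hσval]; rw [← hnorm x]; rfl⟩ with hL
  set T := L.extend with hT
  have hTA : ∀ x : Fin m → ℝ, T (φ x) = ψ x := by
    intro x
    have := L.extend_apply ⟨φ x, LinearMap.mem_range_self φ x⟩
    rw [hT]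
    exact this.trans (hσval x)
  set g : (Fin n → ℝ) →ₗ[ℝ] (Fin n → ℝ) :=
    e.symm.toLinearMap ∘ₗ T.toLinearMap ∘ₗ e.toLinearMap with hg
  set QM : Matrix (Fin n) (Fin n) ℝ := LinearMap.toMatrix' g with hQM
  have hmulv : ∀ u : Fin n → ℝ, QM *ᵥ u = e.symm (T (e u)) := by
    intro u
    rw [hQM, ← Matrix.toLin'_apply, Matrix.toLin'_toMatrix']
    rfl
  have hQA : QM * Aᵀ = Bᵀ := by
    have hv : ∀ u : Fin m → ℝ, (QM * Aᵀ) *ᵥ u = Bᵀ *ᵥ u := by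
      intro u
      rw [← Matrix.mulVec_mulVec, hmulv]
      have h1 : e (Aᵀ *ᵥ u) = φ u := rfl
      rw [h1, hTA u]
      exact (e.symm_apply_apply _)
    ext i j
    have h1 := congrFun (hv (Pi.single j 1)) i
    simpa using h1
  have horth : QMᵀ * QM = 1 := by
    ext i j
    have h1 : ∀ u : Fin n → ℝ, T (e u) = e (QM *ᵥ u) := by
      intro u
      rw [hmulv]
      exact (e.apply_symm_apply _).symm
    have h2 := T.inner_map_map (e (Pi.single i 1)) (e (Pi.single j 1))
    rw [h1, h1] at h2
    simp only [PiLp.inner_apply, RCLike.inner_apply, starRingEnd_apply, star_trivial, happ,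
      Matrix.mulVec_single, mul_one] at h2
    rw [Matrix.mul_apply, Matrix.one_apply]
    calc ∑ k, QMᵀ i k * QM k j = ∑ k, QM k i * QM k j := by
          simp [Matrix.transpose_apply]
      _ = ∑ k, Pi.single i (1:ℝ) k * Pi.single j (1:ℝ) k := by
            simpa [Matrix.col_apply, mul_comm] using h2
      _ = if i = j then 1 else 0 := by
          rcases eq_or_ne i j with rfl | hij
          · simp [Pi.single_apply]
          · simp [Pi.single_apply, hij]
            exact fun h' => hij h'.symm
  refine ⟨QMᵀ, ?_, ?_⟩
  · rw [Matrix.transpose_transpose]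
    exact (mul_eq_one_comm).mp horth
  · have := congrArg Matrix.transpose hQA
    rwa [Matrix.transpose_mul, Matrix.transpose_transpose, Matrix.transpose_transpose] at this

open Filter in
lemma fderiv_orth_zero {m n q : ℕ} (h : Matrix (Fin m) (Fin n) ℝ → (Fin q → ℝ))
    (hsmooth : ContDiff ℝ (⊤ : ℕ∞) h)
    (hinv : ∀ (X : Matrix (Fin m) (Fin n) ℝ) (Q : Matrix (Fin n) (Fin n) ℝ),
      Qᵀ * Q = 1 → h (X * Q) = h X)
    (X W : Matrix (Fin m) (Fin n) ℝ) (hXW : X * Wᵀ = 0) :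
    fderiv ℝ h X W = 0 := by
  have hWX : W * Xᵀ = 0 := by
    have := congrArg Matrix.transpose hXW
    rwa [Matrix.transpose_mul, Matrix.transpose_transpose, Matrix.transpose_zero] at this
  have key : ∀ t : ℝ, h (X + t • W) = h (X - t • W) := by
    intro t
    have hg : (X + t • W) * (X + t • W)ᵀ = (X - t • W) * (X - t • W)ᵀ := by
      simp only [Matrix.transpose_add, Matrix.transpose_sub, Matrix.transpose_smul,
        Matrix.add_mul, Matrix.mul_add, Matrix.sub_mul, Matrix.mul_sub,
        Matrix.smul_mul, Matrix.mul_smul, hXW, hWX, smul_zero]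
      module
    obtain ⟨Q, hQ, hAQ⟩ := gram_exists _ _ hg
    rw [← hAQ, hinv _ Q hQ]
  have hline1 : HasDerivAt (fun t : ℝ => X + t • W) W 0 := by
    have := ((hasDerivAt_id (0:ℝ)).smul_const W).const_add X
    simp only [id_eq, one_smul] at this
    exact this
  have hline2 : HasDerivAt (fun t : ℝ => X - t • W) (-W) 0 := by
    have := ((hasDerivAt_id (0:ℝ)).smul_const W).const_sub X
    simp only [id_eq, one_smul] at this
    exact this
  have hh : HasFDerivAt h (fderiv ℝ h X) X := (hsmooth.differentiable (by simp) X).hasFDerivAt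
  have hh1 : HasFDerivAt h (fderiv ℝ h X) (X + (0:ℝ) • W) := by simpa using hh
  have hh2 : HasFDerivAt h (fderiv ℝ h X) (X - (0:ℝ) • W) := by simpa using hh
  have hd1 : HasDerivAt (fun t : ℝ => h (X + t • W)) (fderiv ℝ h X W) 0 :=
    hh1.comp_hasDerivAt 0 hline1
  have hd2 : HasDerivAt (fun t : ℝ => h (X - t • W)) (fderiv ℝ h X (-W)) 0 :=
    hh2.comp_hasDerivAt 0 hline2
  have hfun : (fun t : ℝ => h (X + t • W)) = fun t : ℝ => h (X - t • W) := funext key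
  rw [hfun] at hd1
  have heq : fderiv ℝ h X W = fderiv ℝ h X (-W) := hd1.unique hd2
  rw [map_neg] at heq
  have h2 : (2 : ℝ) • fderiv ℝ h X W = 0 := by
    rw [two_smul]
    nth_rewrite 2 [heq]
    simp
  rcases smul_eq_zero.mp h2 with h3 | h3
  · norm_num at h3
  · exact h3

open Filter in
lemma exists_N {m n s : ℕ} (X : Matrix (Fin m) (Fin n) ℝ) (hrank : X.rank = s) :
    ∃ N : Matrix (Fin n) (Fin s) ℝ, Nᵀ * N = 1 ∧ X * (N * Nᵀ) = X := by
  classical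
  set e : (Fin n → ℝ) ≃ₗ[ℝ] EuclideanSpace ℝ (Fin n) :=
    (WithLp.linearEquiv 2 ℝ (Fin n → ℝ)).symm with he
  set V : Submodule ℝ (EuclideanSpace ℝ (Fin n)) :=
    (LinearMap.range (Xᵀ.mulVecLin)).map e.toLinearMap with hV
  have hfin : Module.finrank ℝ V = s := by
    rw [hV]
    rw [LinearEquiv.finrank_map_eq e]
    have : Xᵀ.rank = Module.finrank ℝ (LinearMap.range Xᵀ.mulVecLin) := rfl
    rw [← this, Matrix.rank_transpose, hrank]
  set b := (stdOrthonormalBasis ℝ V).reindex (finCongr hfin) with hb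
  set N : Matrix (Fin n) (Fin s) ℝ := fun i j => ((b j : EuclideanSpace ℝ (Fin n)) i) with hN
  have happ : ∀ (u : Fin n → ℝ) (i : Fin n), (e u) i = u i := fun u i => rfl
  refine ⟨N, ?_, ?_⟩
  · ext j k
    have hob := b.orthonormal
    rw [orthonormal_iff_ite] at hob
    have h1 := hob j k
    rw [Submodule.coe_inner] at h1
    simp only [PiLp.inner_apply, RCLike.inner_apply, starRingEnd_apply, star_trivial] at h1
    rw [Matrix.mul_apply, Matrix.one_apply]
    refine Eq.trans ?_ h1
    exact Finset.sum_congr rfl fun x _ => mul_comm _ _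
  · ext a c
    set va : Fin n → ℝ := fun i => X a i with hva
    have hmem : e va ∈ V := by
      rw [hV]
      refine Submodule.mem_map_of_mem ⟨Pi.single a 1, ?_⟩
      rw [Matrix.mulVecLin_apply, Matrix.mulVec_single]
      ext i
      simp [hva, Matrix.transpose_apply]
    have hsum := b.sum_repr ⟨e va, hmem⟩
    have hcoe : ((∑ j, b.repr ⟨e va, hmem⟩ j • b j : V) : EuclideanSpace ℝ (Fin n))
        = e va := by rw [hsum]
    have hc : ∀ j, b.repr ⟨e va, hmem⟩ j = ∑ i, N i j * X a i := by
      intro j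
      rw [b.repr_apply_apply, Submodule.coe_inner]
      simp only [PiLp.inner_apply, RCLike.inner_apply, starRingEnd_apply, star_trivial]
      exact Finset.sum_congr rfl fun i _ => by rw [hN, happ]; exact mul_comm _ _
    have hcoord : (∑ j, (∑ i, N i j * X a i) • (b j : EuclideanSpace ℝ (Fin n))) c = va c := by
      have h1 : (∑ j, (∑ i, N i j * X a i) • (b j : EuclideanSpace ℝ (Fin n)))
          = ((∑ j, b.repr ⟨e va, hmem⟩ j • b j : V) : EuclideanSpace ℝ (Fin n)) := by
        rw [show ((∑ j, b.repr ⟨e va, hmem⟩ j • b j : V) : EuclideanSpace ℝ (Fin n))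
          = ∑ j, b.repr ⟨e va, hmem⟩ j • (b j : EuclideanSpace ℝ (Fin n)) by push_cast; rfl]
        exact Finset.sum_congr rfl fun j _ => by rw [hc j]
      rw [h1, hcoe]
      rfl
    have hval : (∑ j, (∑ i, N i j * X a i) • (b j : EuclideanSpace ℝ (Fin n))) c
        = ∑ j, (∑ i, N i j * X a i) * N c j := by
      rw [show ((∑ j, (∑ i, N i j * X a i) • (b j : EuclideanSpace ℝ (Fin n))) c)
        = ∑ j, ((∑ i, N i j * X a i) • (b j : EuclideanSpace ℝ (Fin n))) c from
        by rw [WithLp.ofLp_sum, Finset.sum_apply]]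
      exact Finset.sum_congr rfl fun j _ => rfl
    rw [← Matrix.mul_assoc, Matrix.mul_apply]
    calc ∑ j, (X * N) a j * Nᵀ j c = ∑ j, (∑ i, N i j * X a i) * N c j := by
          refine Finset.sum_congr rfl fun j _ => ?_
          rw [Matrix.mul_apply, Matrix.transpose_apply]
          congr 1
          exact Finset.sum_congr rfl fun i _ => mul_comm _ _
      _ = va c := by rw [← hval, hcoord]
      _ = X a c := rfl

open Filter in
lemma tangent_seq {E F : Type*} [NormedAddCommGroup E] [NormedSpace ℝ E] [CompleteSpace E]
    [NormedAddCommGroup F] [NormedSpace ℝ F] [FiniteDimensional ℝ F]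
    {g : E → F} {g' : E →L[ℝ] F} {a : E} (hg : HasStrictFDerivAt g g' a)
    (hsurj : LinearMap.range (g' : E →ₗ[ℝ] F) = ⊤) (ha : g a = 0) {w : E} (hw : g' w = 0) :
    ∃ u : ℕ → E, (∀ᶠ k in atTop, g (u k) = 0) ∧
      Tendsto (fun k : ℕ => ((k : ℝ) + 1) • (u k - a)) atTop (nhds w) := by
  set wk : LinearMap.ker (g' : E →ₗ[ℝ] F) := ⟨w, hw⟩ with hwk
  set φ := hg.implicitFunction g g' hsurj with hφ
  refine ⟨fun k => φ 0 (((k : ℝ) + 1)⁻¹ • wk), ?_, ?_⟩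
  · have h2 : Tendsto (fun k : ℕ => (((k : ℝ) + 1)⁻¹ • wk : LinearMap.ker (g' : E →ₗ[ℝ] F))) atTop (nhds 0) := by
      have h3 : Tendsto (fun k : ℕ => ((k : ℝ) + 1)⁻¹) atTop (nhds 0) := by
        simpa [one_div] using tendsto_one_div_add_atTop_nhds_zero_nat (𝕜 := ℝ)
      simpa using h3.smul_const wk
    have hev := hg.map_implicitFunction_eq hsurj
    rw [ha] at hev
    have htend : Tendsto (fun k : ℕ => ((0 : F), ((k : ℝ) + 1)⁻¹ • wk)) atTop
        (nhds ((0 : F), (0 : LinearMap.ker (g' : E →ₗ[ℝ] F)))) := tendsto_const_nhds.prodMk_nhds h2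
    filter_upwards [htend.eventually hev] with k hk using hk
  · have hder : HasStrictFDerivAt (φ (g a)) (LinearMap.ker (g' : E →ₗ[ℝ] F)).subtypeL 0 :=
      hg.to_implicitFunction hsurj
    rw [ha] at hder
    have h0 : φ 0 0 = a := by
      have := hg.implicitFunction_apply_image hsurj
      rwa [ha] at this
    have hc : Tendsto (fun k : ℕ => ‖(k : ℝ) + 1‖) atTop atTop := by
      have h1 : Tendsto (fun k : ℕ => (k : ℝ) + 1) atTop atTop :=
        tendsto_atTop_add_const_right atTop 1 tendsto_natCast_atTop_atTop
      exact tendsto_norm_atTop_atTop.comp h1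
    have := hder.hasFDerivAt.lim wk hc
    simp only [zero_add, h0] at this
    simpa using this

open Filter in
lemma chart_tangent {m n q r : ℕ} {ι : Type} [Fintype ι] [DecidableEq ι]
    (hcard : Fintype.card ι ≤ r)
    (h : Matrix (Fin m) (Fin n) ℝ → (Fin q → ℝ)) (hsmooth : ContDiff ℝ (⊤ : ℕ∞) h)
    (X : Matrix (Fin m) (Fin n) ℝ) (hX : h X = 0)
    (L₀ : Matrix (Fin m) ι ℝ) (R₀ : Matrix (Fin n) ι ℝ) (hLR : L₀ * R₀ᵀ = X)
    (hsurj : ∀ v : Fin q → ℝ, ∃ p : Matrix (Fin m) ι ℝ × Matrix (Fin n) ι ℝ,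
      fderiv ℝ h X (p.1 * R₀ᵀ + L₀ * p.2ᵀ) = v)
    (ΔL : Matrix (Fin m) ι ℝ) (ΔR : Matrix (Fin n) ι ℝ)
    (hker : fderiv ℝ h X (ΔL * R₀ᵀ + L₀ * ΔRᵀ) = 0) :
    (ΔL * R₀ᵀ + L₀ * ΔRᵀ) ∈ bouligandCone
      {X' : Matrix (Fin m) (Fin n) ℝ | X'.rank ≤ r ∧ h X' = 0} X := by
  classical
  have hrankmul : ∀ (L : Matrix (Fin m) ι ℝ) (R : Matrix (Fin n) ι ℝ),
      (L * Rᵀ).rank ≤ r :=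
    fun L R => le_trans (le_trans (Matrix.rank_mul_le_left L Rᵀ) (Matrix.rank_le_card_width L))
      hcard
  have hrankX : X.rank ≤ r := hLR ▸ hrankmul L₀ R₀
  -- bounded bilinear map
  set Ψ : (Matrix (Fin m) ι ℝ × Matrix (Fin n) ι ℝ) → Matrix (Fin m) (Fin n) ℝ :=
    fun p => p.1 * p.2ᵀ with hΨdef
  have hB : IsBoundedBilinearMap ℝ Ψ := by
    refine ⟨fun x₁ x₂ y => ?_, fun c x y => ?_, fun x y₁ y₂ => ?_, fun c x y => ?_, ?_⟩
    · simp [hΨdef, Matrix.add_mul]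
    · simp [hΨdef, Matrix.smul_mul]
    · simp [hΨdef, Matrix.transpose_add, Matrix.mul_add]
    · simp [hΨdef, Matrix.transpose_smul, Matrix.mul_smul]
    · refine ⟨Fintype.card ι + 1, by positivity, fun x y => ?_⟩
      have h0 : (0:ℝ) ≤ (Fintype.card ι + 1) * ‖x‖ * ‖y‖ := by positivity
      rw [Matrix.norm_le_iff h0]
      intro i j
      have : (Ψ (x, y)) i j = ∑ k, x i k * y j k := by
        simp [hΨdef, Matrix.mul_apply]
      rw [this]
      calc ‖∑ k, x i k * y j k‖ ≤ ∑ k, ‖x i k * y j k‖ := norm_sum_le _ _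
        _ ≤ ∑ _k : ι, ‖x‖ * ‖y‖ := by
            refine Finset.sum_le_sum fun k _ => ?_
            rw [norm_mul]
            exact mul_le_mul (Matrix.norm_entry_le_entrywise_sup_norm x)
              (Matrix.norm_entry_le_entrywise_sup_norm y) (norm_nonneg _) (norm_nonneg _)
        _ = (Fintype.card ι : ℝ) * (‖x‖ * ‖y‖) := by
            rw [Finset.sum_const, Finset.card_univ, nsmul_eq_mul]
        _ ≤ (Fintype.card ι + 1) * ‖x‖ * ‖y‖ := by
            rw [mul_assoc]
            have := mul_nonneg (norm_nonneg x) (norm_nonneg y)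
            nlinarith
  set a : Matrix (Fin m) ι ℝ × Matrix (Fin n) ι ℝ := (L₀, R₀) with ha
  have hΨa : Ψ a = X := hLR
  have hΨstrict : HasStrictFDerivAt Ψ (hB.deriv a) a := hB.hasStrictFDerivAt a
  have hderiv_apply : ∀ d : Matrix (Fin m) ι ℝ × Matrix (Fin n) ι ℝ,
      hB.deriv a d = L₀ * d.2ᵀ + d.1 * R₀ᵀ := fun d => hB.deriv_apply a d
  have hh : HasStrictFDerivAt h (fderiv ℝ h X) X :=
    (hsmooth.contDiffAt).hasStrictFDerivAt (by simp)
  have hh' : HasStrictFDerivAt h (fderiv ℝ h X) (Ψ a) := hΨa ▸ hh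
  have hG : HasStrictFDerivAt (fun p => h (Ψ p)) ((fderiv ℝ h X).comp (hB.deriv a)) a :=
    hh'.comp a hΨstrict
  have hrange : LinearMap.range ((fderiv ℝ h X).comp (hB.deriv a)).toLinearMap = ⊤ := by
    rw [LinearMap.range_eq_top]
    intro v
    obtain ⟨p, hp⟩ := hsurj v
    exact ⟨p, by change fderiv ℝ h X (hB.deriv a p) = v; rw [hderiv_apply, add_comm]; exact hp⟩
  have hga : h (Ψ a) = 0 := by rw [hΨa]; exact hX
  have hwker : ((fderiv ℝ h X).comp (hB.deriv a)) (ΔL, ΔR) = 0 := by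
    change fderiv ℝ h X (hB.deriv a (ΔL, ΔR)) = 0
    rw [hderiv_apply, add_comm]
    exact hker
  obtain ⟨u, hu0, hulim⟩ := tangent_seq hG hrange hga hwker
  -- construct the sequences
  refine ⟨fun k => if h (Ψ (u k)) = 0 then Ψ (u k) else X,
    fun k => ((k : ℝ) + 1)⁻¹, fun k => ?_, fun k => by positivity, ?_, ?_⟩
  · by_cases hk : h (Ψ (u k)) = 0
    · simp only [hk, if_pos]
      exact ⟨hrankmul _ _, hk⟩
    · simp only [hk, if_neg, if_false]
      exact ⟨hrankX, hX⟩
  · simpa [one_div] using tendsto_one_div_add_atTop_nhds_zero_nat (𝕜 := ℝ)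
  · simp only [inv_inv]
    set W := ΔL * R₀ᵀ + L₀ * ΔRᵀ with hW
    have hWd : hB.deriv a (ΔL, ΔR) = W := by rw [hderiv_apply, add_comm]
    -- key algebraic identity
    have halg : ∀ k : ℕ, ((k : ℝ) + 1) • (Ψ (u k) - X)
        = hB.deriv a (((k : ℝ) + 1) • (u k - a))
          + ((k : ℝ) + 1)⁻¹ • Ψ (((k : ℝ) + 1) • (u k - a)) := by
      intro k
      set c : ℝ := (k : ℝ) + 1 with hc
      have hc0 : c ≠ 0 := by positivity
      rw [hderiv_apply]
      show c • ((u k).1 * (u k).2ᵀ - X)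
        = L₀ * (c • ((u k).2 - R₀))ᵀ + (c • ((u k).1 - L₀)) * R₀ᵀ
          + c⁻¹ • ((c • ((u k).1 - L₀)) * (c • ((u k).2 - R₀))ᵀ)
      rw [← hLR]
      simp only [Matrix.transpose_smul, Matrix.transpose_sub, Matrix.smul_mul, Matrix.mul_smul,
        smul_smul, Matrix.sub_mul, Matrix.mul_sub]
      rw [inv_mul_cancel₀ hc0, one_smul]
      module
    have hlim1 : Tendsto (fun k : ℕ => hB.deriv a (((k : ℝ) + 1) • (u k - a))) atTop
        (nhds W) := by
      rw [← hWd]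
      exact ((hB.deriv a).continuous.tendsto _).comp hulim
    have hlim2 : Tendsto (fun k : ℕ => ((k : ℝ) + 1)⁻¹ • Ψ (((k : ℝ) + 1) • (u k - a))) atTop
        (nhds 0) := by
      have h1 : Tendsto (fun k : ℕ => Ψ (((k : ℝ) + 1) • (u k - a))) atTop
          (nhds (Ψ (ΔL, ΔR))) := (hB.continuous.tendsto _).comp hulim
      have h2 : Tendsto (fun k : ℕ => ((k : ℝ) + 1)⁻¹) atTop (nhds 0) := by
        simpa [one_div] using tendsto_one_div_add_atTop_nhds_zero_nat (𝕜 := ℝ)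
      simpa using h2.smul h1
    have hmain : Tendsto (fun k : ℕ => ((k : ℝ) + 1) • (Ψ (u k) - X)) atTop (nhds W) := by
      have := hlim1.add hlim2
      rw [add_zero] at this
      exact this.congr fun k => (halg k).symm
    refine hmain.congr' ?_
    filter_upwards [hu0] with k hk
    simp only [hk, if_pos]

/-- If `X` is a stationary point of `min f` over `R_{≤r} ∩ H`
(`h` satisfying the blanket assumption) with `rank X = s < r`, then
`−∇f(X) ∈ N_X H`, i.e. the negative gradient is (Frobenius-)orthogonal to
`ker (Dh_X)`. -/
theorem stationary_low_rank {m n q r s : ℕ} (hsr : s < r) (hrm : r ≤ m) (hrn : r ≤ n)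
    (h : Matrix (Fin m) (Fin n) ℝ → (Fin q → ℝ))
    (hsmooth : ContDiff ℝ (⊤ : ℕ∞) h)
    (hinv : ∀ (X : Matrix (Fin m) (Fin n) ℝ) (Q : Matrix (Fin n) (Fin n) ℝ),
      Qᵀ * Q = 1 → h (X * Q) = h X)
    (hfullrank : ∀ X : Matrix (Fin m) (Fin n) ℝ, h X = 0 →
      Function.Surjective (fderiv ℝ h X))
    (f : Matrix (Fin m) (Fin n) ℝ → ℝ) (hf : ContDiff ℝ 2 f)
    (X : Matrix (Fin m) (Fin n) ℝ) (hX : h X = 0) (hrank : X.rank = s)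
    (Gf : Matrix (Fin m) (Fin n) ℝ)   -- the (Euclidean) gradient ∇f(X)
    (hGf : ∀ Z : Matrix (Fin m) (Fin n) ℝ, fderiv ℝ f X Z = (Gfᵀ * Z).trace)
    (hstat : -Gf ∈ frechetNormalCone
      {X' : Matrix (Fin m) (Fin n) ℝ | X'.rank ≤ r ∧ h X' = 0} X) :
    ∀ Z ∈ LinearMap.ker (fderiv ℝ h X).toLinearMap, (Zᵀ * (-Gf)).trace = 0 := by
  classical
  intro Z hZ
  have hZ0 : fderiv ℝ h X Z = 0 := LinearMap.mem_ker.mp hZ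
  obtain ⟨N, hNN, hXNN⟩ := exists_N X hrank
  set P : Matrix (Fin n) (Fin n) ℝ := N * Nᵀ with hP
  have hPt : Pᵀ = P := by rw [hP, Matrix.transpose_mul, Matrix.transpose_transpose]
  have hXP : X * P = X := hXNN
  have hX1P : X * (1 - P) = 0 := by rw [Matrix.mul_sub, Matrix.mul_one, hXP, sub_self]
  have hkill : ∀ Z' : Matrix (Fin m) (Fin n) ℝ, fderiv ℝ h X (Z' * (1 - P)) = 0 := by
    intro Z'
    apply fderiv_orth_zero h hsmooth hinv
    rw [Matrix.transpose_mul, Matrix.transpose_sub, Matrix.transpose_one, hPt,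
      ← Matrix.mul_assoc, hX1P, Matrix.zero_mul]
  have hsplitD : ∀ Z' : Matrix (Fin m) (Fin n) ℝ,
      fderiv ℝ h X (Z' * P) = fderiv ℝ h X Z' := by
    intro Z'
    have h1 : Z' * P = Z' - Z' * (1 - P) := by
      rw [Matrix.mul_sub, Matrix.mul_one, sub_sub_cancel]
    rw [h1, map_sub, hkill, sub_zero]
  have hcard : Fintype.card (Fin s ⊕ Unit) ≤ r := by
    simp only [Fintype.card_sum, Fintype.card_fin, Fintype.card_unit]
    omega
  have main_chart : ∀ (L1 : Matrix (Fin m) Unit ℝ) (ΔL' : Matrix (Fin m) (Fin s) ℝ)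
      (ΔR1 : Matrix (Fin n) Unit ℝ),
      fderiv ℝ h X (ΔL' * Nᵀ + L1 * ΔR1ᵀ) = 0 →
      (ΔL' * Nᵀ + L1 * ΔR1ᵀ) ∈ bouligandCone
        {X' : Matrix (Fin m) (Fin n) ℝ | X'.rank ≤ r ∧ h X' = 0} X := by
    intro L1 ΔL' ΔR1 hker0
    have hEq : (fromCols ΔL' (0 : Matrix (Fin m) Unit ℝ))
          * (fromCols N (0 : Matrix (Fin n) Unit ℝ))ᵀ
        + (fromCols (X * N) L1) * (fromCols (0 : Matrix (Fin n) (Fin s) ℝ) ΔR1)ᵀ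
        = ΔL' * Nᵀ + L1 * ΔR1ᵀ := by
      rw [Matrix.transpose_fromCols, Matrix.transpose_fromCols,
        Matrix.fromCols_mul_fromRows, Matrix.fromCols_mul_fromRows]
      simp
    have hLRc : (fromCols (X * N) L1) * (fromCols N (0 : Matrix (Fin n) Unit ℝ))ᵀ
        = X := by
      rw [Matrix.transpose_fromCols, Matrix.fromCols_mul_fromRows]
      simp [Matrix.mul_assoc, hXNN]
      exact hXNN
    have hsurjc : ∀ v : Fin q → ℝ,
        ∃ p : Matrix (Fin m) (Fin s ⊕ Unit) ℝ × Matrix (Fin n) (Fin s ⊕ Unit) ℝ,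
          fderiv ℝ h X (p.1 * (fromCols N (0 : Matrix (Fin n) Unit ℝ))ᵀ
            + (fromCols (X * N) L1) * p.2ᵀ) = v := by
      intro v
      obtain ⟨Z', hZ'⟩ := hfullrank X hX v
      refine ⟨(fromCols (Z' * N) (0 : Matrix (Fin m) Unit ℝ), 0), ?_⟩
      have h2 : (fromCols (Z' * N) (0 : Matrix (Fin m) Unit ℝ))
            * (fromCols N (0 : Matrix (Fin n) Unit ℝ))ᵀ
          + (fromCols (X * N) L1) * (0 : Matrix (Fin n) (Fin s ⊕ Unit) ℝ)ᵀ
          = Z' * P := by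
        rw [Matrix.transpose_fromCols, Matrix.fromCols_mul_fromRows]
        simp [Matrix.mul_assoc, hP]
      rw [h2, hsplitD, hZ']
    have hkerc : fderiv ℝ h X ((fromCols ΔL' (0 : Matrix (Fin m) Unit ℝ))
          * (fromCols N (0 : Matrix (Fin n) Unit ℝ))ᵀ
        + (fromCols (X * N) L1) * (fromCols (0 : Matrix (Fin n) (Fin s) ℝ) ΔR1)ᵀ)
        = 0 := by rw [hEq]; exact hker0
    have hmem := chart_tangent hcard h hsmooth X hX _ _ hLRc hsurjc _ _ hkerc
    rw [hEq] at hmem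
    exact hmem
  have htrace0 : ∀ W : Matrix (Fin m) (Fin n) ℝ,
      (∃ (L1 : Matrix (Fin m) Unit ℝ) (ΔL' : Matrix (Fin m) (Fin s) ℝ)
        (ΔR1 : Matrix (Fin n) Unit ℝ), ΔL' * Nᵀ + L1 * ΔR1ᵀ = W) →
      fderiv ℝ h X W = 0 → (Wᵀ * (-Gf)).trace = 0 := by
    rintro W ⟨L1, ΔL', ΔR1, rfl⟩ hk
    have h1 := hstat _ (main_chart L1 ΔL' ΔR1 hk)
    have hnegW : (-ΔL') * Nᵀ + L1 * (-ΔR1)ᵀ = -(ΔL' * Nᵀ + L1 * ΔR1ᵀ) := by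
      simp [Matrix.neg_mul, Matrix.mul_neg]
      abel
    have hk2 : fderiv ℝ h X ((-ΔL') * Nᵀ + L1 * (-ΔR1)ᵀ) = 0 := by
      rw [hnegW, map_neg, hk, neg_zero]
    have h2 := hstat _ (main_chart L1 (-ΔL') (-ΔR1) hk2)
    rw [hnegW] at h2
    have h3 : ((-(ΔL' * Nᵀ + L1 * ΔR1ᵀ))ᵀ * (-Gf)).trace
        = -(((ΔL' * Nᵀ + L1 * ΔR1ᵀ)ᵀ) * (-Gf)).trace := by
      rw [Matrix.transpose_neg, Matrix.neg_mul, Matrix.trace_neg]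
    rw [h3] at h2
    linarith
  set colI : Fin m → Matrix (Fin m) Unit ℝ :=
    fun i => fun a _ => if a = i then 1 else 0 with hcolI
  set W1 : Matrix (Fin m) (Fin n) ℝ := Z * (1 - P) with hW1
  set rowI : Fin m → Matrix (Fin n) Unit ℝ :=
    fun i => fun b _ => W1 i b with hrowI
  have hXZP : X * W1ᵀ = 0 := by
    rw [hW1]
    rw [Matrix.transpose_mul, Matrix.transpose_sub, Matrix.transpose_one, hPt,
      ← Matrix.mul_assoc, hX1P, Matrix.zero_mul]
  have hXrow : ∀ i, X * rowI i = 0 := by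
    intro i
    ext a u
    rw [Matrix.mul_apply]
    have h4 := congrFun (congrFun hXZP a) i
    rw [Matrix.mul_apply] at h4
    simpa [hrowI, hW1, Matrix.transpose_apply] using h4
  have hDWi : ∀ i, fderiv ℝ h X (colI i * (rowI i)ᵀ) = 0 := by
    intro i
    apply fderiv_orth_zero h hsmooth hinv
    rw [Matrix.transpose_mul, Matrix.transpose_transpose, ← Matrix.mul_assoc, hXrow i,
      Matrix.zero_mul]
  have hZPtrace : ((Z * P)ᵀ * (-Gf)).trace = 0 := by
    refine htrace0 (Z * P) ⟨0, Z * N, 0, by simp [hP, Matrix.mul_assoc]⟩ ?_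
    rw [hsplitD, hZ0]
  have hWitrace : ∀ i, ((colI i * (rowI i)ᵀ)ᵀ * (-Gf)).trace = 0 := by
    intro i
    exact htrace0 _ ⟨colI i, 0, rowI i, by simp⟩ (hDWi i)
  have hsumW : W1 = ∑ i, colI i * (rowI i)ᵀ := by
    ext a b
    rw [Matrix.sum_apply]
    have hterm : ∀ c : Fin m, (colI c * (rowI c)ᵀ) a b
        = (if a = c then (1:ℝ) else 0) * W1 c b := fun c => by
      rw [Matrix.mul_apply]
      simp only [Matrix.transpose_apply]
      simp [hcolI, hrowI]
    rw [Finset.sum_congr rfl fun c _ => hterm c]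
    simp
  have hdecomp : Z = Z * P + ∑ i, colI i * (rowI i)ᵀ := by
    rw [← hsumW, hW1, Matrix.mul_sub, Matrix.mul_one]
    abel
  calc (Zᵀ * (-Gf)).trace
      = ((Z * P)ᵀ * (-Gf)).trace + ((∑ i, colI i * (rowI i)ᵀ)ᵀ * (-Gf)).trace := by
        nth_rewrite 1 [hdecomp]
        rw [Matrix.transpose_add, Matrix.add_mul, Matrix.trace_add]
    _ = 0 := by
        rw [hZPtrace, zero_add]
        rw [Matrix.transpose_sum, Matrix.sum_mul, Matrix.trace_sum]
        exact Finset.sum_eq_zero fun i _ => hWitrace i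
end
end

section
/- Equip M_h with the metric ⟨(E_1,Z_1),(E_2,Z_2)⟩_ω = ⟨E_1,E_2⟩ + ω⟨Z_1,Z_2⟩ for ω > 0. Given (X,G) ∈ M_h with representation (H,V), the orthogonal projection of (E,Z) ∈ R^{m×n} × Sym(n) onto T_{(X,G)} M_h is represented by K̄ = P_{T_H H^r}(EV) and V̄_p = G(E^T H − 2ωZV)M_{H,ω}^{-1}, where M_{H,ω} = 2ωI + H^T H. -/
open Matrix

noncomputable section
attribute [local instance] Matrix.normedAddCommGroup Matrix.normedSpace

/-- The natural embedding `i^r : ℝ^{m×r} → ℝ^{m×n}`, `H ↦ [H 0]`. -/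
def pad {m : ℕ} (r n : ℕ) (H : Matrix (Fin m) (Fin r) ℝ) : Matrix (Fin m) (Fin n) ℝ :=
  Matrix.of fun i j => if hj : (j : ℕ) < r then H i ⟨j, hj⟩ else 0

private lemma trace_tr {a b : ℕ} (A B : Matrix (Fin a) (Fin b) ℝ) :
    (Aᵀ * B).trace = (Bᵀ * A).trace := by
  rw [← Matrix.trace_transpose, Matrix.transpose_mul, Matrix.transpose_transpose,
    Matrix.trace_mul_comm]

/-- With the metric `⟨(E₁,Z₁),(E₂,Z₂)⟩_ω = ⟨E₁,E₂⟩ + ω⟨Z₁,Z₂⟩`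
on `M_h`, the orthogonal projection of `(E,Z)` onto `T_{(X,G)} M_h` is represented by
`K̄ = P_{T_H Hʳ}(E V)` and `V̄_p = G (Eᵀ H − 2ω Z V) M_{H,ω}⁻¹`,
where `M_{H,ω} = 2ω I + Hᵀ H`. -/
theorem projection_onto_TMh {m n q r : ℕ} (hrm : r ≤ m) (hrn : r ≤ n)
    (ω : ℝ) (hω : 0 < ω)
    (h : Matrix (Fin m) (Fin n) ℝ → (Fin q → ℝ))
    (hsmooth : ContDiff ℝ (⊤ : ℕ∞) h)
    (hinv : ∀ (X : Matrix (Fin m) (Fin n) ℝ) (Q : Matrix (Fin n) (Fin n) ℝ),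
      Qᵀ * Q = 1 → h (X * Q) = h X)
    (hfullrank : ∀ X : Matrix (Fin m) (Fin n) ℝ, h X = 0 →
      Function.Surjective (fderiv ℝ h X))
    (X : Matrix (Fin m) (Fin n) ℝ) (G : Matrix (Fin n) (Fin n) ℝ)
    (H : Matrix (Fin m) (Fin r) ℝ) (V : Matrix (Fin n) (Fin r) ℝ)
    (hX : h X = 0) (hXG : X * G = 0) (hGsym : Gᵀ = G) (hGproj : G * G = G)
    (hGrank : G.rank = n - r)
    (hV : Vᵀ * V = 1) (hrep : X = H * Vᵀ) (hG : G = 1 - V * Vᵀ)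
    (E : Matrix (Fin m) (Fin n) ℝ) (Z : Matrix (Fin n) (Fin n) ℝ) (hZ : Zᵀ = Z)
    (Kbar : Matrix (Fin m) (Fin r) ℝ)
    -- `Kbar` is the Frobenius-orthogonal projection of `E V` onto `T_H Hʳ`:
    (hKmem : Kbar ∈ LinearMap.ker ((fderiv ℝ (fun H' => h (pad r n H')) H :
        Matrix (Fin m) (Fin r) ℝ →ₗ[ℝ] (Fin q → ℝ))))
    (hKproj : ∀ K' ∈ LinearMap.ker ((fderiv ℝ (fun H' => h (pad r n H')) H :
        Matrix (Fin m) (Fin r) ℝ →ₗ[ℝ] (Fin q → ℝ))),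
      ((E * V - Kbar)ᵀ * K').trace = 0) :
    -- with `V̄_p = G (Eᵀ H − 2ω Z V) M_{H,ω}⁻¹`,
    ∀ Vpbar : Matrix (Fin n) (Fin r) ℝ,
      Vpbar = G * (Eᵀ * H - (2 * ω) • (Z * V)) *
        ((2 * ω) • (1 : Matrix (Fin r) (Fin r) ℝ) + Hᵀ * H)⁻¹ →
      -- the pair `(K̄, V̄_p)` represents a tangent vector,
      (Kbar ∈ LinearMap.ker ((fderiv ℝ (fun H' => h (pad r n H')) H :
        Matrix (Fin m) (Fin r) ℝ →ₗ[ℝ] (Fin q → ℝ))) ∧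
        Vᵀ * Vpbar = 0) ∧
      -- which is the `⟨·,·⟩_ω`-orthogonal projection of `(E,Z)` onto the tangent space:
      (∀ (K : Matrix (Fin m) (Fin r) ℝ) (Vp : Matrix (Fin n) (Fin r) ℝ),
        K ∈ LinearMap.ker ((fderiv ℝ (fun H' => h (pad r n H')) H :
          Matrix (Fin m) (Fin r) ℝ →ₗ[ℝ] (Fin q → ℝ))) →
        Vᵀ * Vp = 0 →
        ((E - (Kbar * Vᵀ + H * Vpbarᵀ))ᵀ * (K * Vᵀ + H * Vpᵀ)).trace +
          ω * ((Z - (-(Vpbar * Vᵀ) - V * Vpbarᵀ))ᵀ *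
            (-(Vp * Vᵀ) - V * Vpᵀ)).trace = 0) := by
  intro Vpbar hVp
  have hVtG : Vᵀ * G = 0 := by
    rw [hG, Matrix.mul_sub, Matrix.mul_one, ← Matrix.mul_assoc, hV, Matrix.one_mul, sub_self]
  have hVtVpbar : Vᵀ * Vpbar = 0 := by
    rw [hVp, ← Matrix.mul_assoc, ← Matrix.mul_assoc, hVtG, Matrix.zero_mul, Matrix.zero_mul]
  refine ⟨⟨hKmem, hVtVpbar⟩, ?_⟩
  intro K Vp hK hVtVp
  have hVptV : Vpᵀ * V = 0 := by
    have := congrArg Matrix.transpose hVtVp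
    simpa using this
  have hVpbartV : Vpbarᵀ * V = 0 := by
    have := congrArg Matrix.transpose hVtVpbar
    simpa using this
  -- invertibility of M
  set M : Matrix (Fin r) (Fin r) ℝ := (2 * ω) • (1 : Matrix (Fin r) (Fin r) ℝ) + Hᵀ * H with hMdef
  have hMpd : M.PosDef := by
    apply Matrix.PosDef.add_posSemidef
    · rw [Matrix.smul_one_eq_diagonal]
      rw [Matrix.posDef_diagonal_iff]
      intro i; positivity
    · have := Matrix.posSemidef_conjTranspose_mul_self H
      rwa [Matrix.conjTranspose_eq_transpose_of_trivial] at this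
  have hMinv : M⁻¹ * M = 1 := Matrix.nonsing_inv_mul M hMpd.det_pos.ne'.isUnit
  set C : Matrix (Fin n) (Fin r) ℝ := Eᵀ * H - (2 * ω) • (Z * V) with hCdef
  have hVpbarM : Vpbar * M = G * C := by
    rw [hVp, Matrix.mul_assoc, hMinv, Matrix.mul_one]
  -- C - Vpbar * M = V * (Vᵀ * C)
  have hCVM : C - Vpbar * M = V * (Vᵀ * C) := by
    rw [hVpbarM, hG, Matrix.sub_mul, Matrix.one_mul, sub_sub_cancel, Matrix.mul_assoc]
  -- matrix-level facts
  set A : Matrix (Fin m) (Fin n) ℝ := E - (Kbar * Vᵀ + H * Vpbarᵀ) with hAdef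
  have hAV : A * V = E * V - Kbar := by
    rw [hAdef, Matrix.sub_mul, Matrix.add_mul, Matrix.mul_assoc, Matrix.mul_assoc,
      hV, hVpbartV, Matrix.mul_one, Matrix.mul_zero, add_zero]
  have hVptA : Vpᵀ * Aᵀ = Vpᵀ * Eᵀ - (Vpᵀ * Vpbar) * Hᵀ := by
    rw [hAdef]
    simp only [Matrix.transpose_sub, Matrix.transpose_add, Matrix.transpose_mul,
      Matrix.transpose_transpose, Matrix.mul_sub, Matrix.mul_add]
    rw [← Matrix.mul_assoc, ← Matrix.mul_assoc, hVptV, Matrix.zero_mul, zero_add]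
  set W : Matrix (Fin n) (Fin n) ℝ := Z - (-(Vpbar * Vᵀ) - V * Vpbarᵀ) with hWdef
  have hWsymm : Wᵀ = W := by
    rw [hWdef]
    simp only [Matrix.transpose_sub, Matrix.transpose_neg, Matrix.transpose_mul,
      Matrix.transpose_transpose, hZ]
    abel
  have hWV : W * V = Z * V + Vpbar := by
    rw [hWdef]
    simp only [Matrix.sub_mul, Matrix.neg_mul, Matrix.mul_assoc, hV, hVpbartV,
      Matrix.mul_one, Matrix.mul_zero, add_zero]
    abel
  -- trace computations
  have t1 : ((E - (Kbar * Vᵀ + H * Vpbarᵀ))ᵀ * (K * Vᵀ + H * Vpᵀ)).trace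
      = ((E * V - Kbar)ᵀ * K).trace + ((Vpᵀ * Eᵀ) * H).trace - ((Vpᵀ * Vpbar) * (Hᵀ * H)).trace := by
    rw [show (E - (Kbar * Vᵀ + H * Vpbarᵀ)) = A from rfl]
    rw [Matrix.mul_add, Matrix.trace_add]
    have e1 : (Aᵀ * (K * Vᵀ)).trace = ((E * V - Kbar)ᵀ * K).trace := by
      rw [← Matrix.mul_assoc, Matrix.trace_mul_cycle, ← Matrix.transpose_mul, hAV]
    have e2 : (Aᵀ * (H * Vpᵀ)).trace = ((Vpᵀ * Eᵀ) * H).trace - ((Vpᵀ * Vpbar) * (Hᵀ * H)).trace := by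
      rw [← Matrix.mul_assoc, Matrix.trace_mul_cycle, ← Matrix.mul_assoc, hVptA,
        Matrix.sub_mul, Matrix.trace_sub, Matrix.mul_assoc (Vpᵀ * Vpbar)]
    rw [e1, e2]; ring
  have t2 : ((Z - (-(Vpbar * Vᵀ) - V * Vpbarᵀ))ᵀ * (-(Vp * Vᵀ) - V * Vpᵀ)).trace
      = -(2 * (Vpᵀ * (Z * V + Vpbar)).trace) := by
    rw [show (Z - (-(Vpbar * Vᵀ) - V * Vpbarᵀ)) = W from rfl]
    rw [Matrix.mul_sub, Matrix.mul_neg, Matrix.trace_sub, Matrix.trace_neg]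
    have e3 : (Wᵀ * (Vp * Vᵀ)).trace = (Vpᵀ * (Z * V + Vpbar)).trace := by
      rw [← Matrix.mul_assoc, Matrix.trace_mul_cycle, ← Matrix.transpose_mul, hWV, trace_tr]
    have e4 : (Wᵀ * (V * Vpᵀ)).trace = (Vpᵀ * (Z * V + Vpbar)).trace := by
      rw [Matrix.trace_mul_cycle', hWsymm, hWV]
    rw [e3, e4]; ring
  have key : ((Vpᵀ * Eᵀ) * H).trace - ((Vpᵀ * Vpbar) * (Hᵀ * H)).trace
      - 2 * ω * (Vpᵀ * (Z * V + Vpbar)).trace = 0 := by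
    have hz : (Vpᵀ * (C - Vpbar * M)).trace = 0 := by
      rw [hCVM, ← Matrix.mul_assoc, hVptV, Matrix.zero_mul, Matrix.trace_zero]
    rw [Matrix.mul_sub, Matrix.trace_sub, hCdef, hMdef] at hz
    rw [Matrix.mul_sub, Matrix.trace_sub, Matrix.mul_smul, Matrix.trace_smul,
      ← Matrix.mul_assoc, ← Matrix.mul_assoc (Vpᵀ) Vpbar, Matrix.mul_add,
      Matrix.mul_smul, Matrix.mul_one, Matrix.trace_add, Matrix.trace_smul] at hz
    rw [Matrix.mul_add, Matrix.trace_add, ← Matrix.mul_assoc, ← Matrix.mul_assoc]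
    simp only [smul_eq_mul, Matrix.mul_assoc] at hz ⊢
    linarith [hz]
  have hS : ((E * V - Kbar)ᵀ * K).trace = 0 := hKproj K hK
  rw [t1, t2, hS]
  ring_nf
  linarith [key]
end
end

section
/- A point (X,G) ∈ M_h with representation (H,V) is a first-order stationary point of min_{(X,G)∈M_h} f(φ(X,G)) if and only if ∇f(X)V ∈ N_H H^r and G∇f(X)^T H = 0. -/
open Matrix

noncomputable section
attribute [local instance] Matrix.normedAddCommGroup Matrix.normedSpace

lemma trace_transpose_mul_self_eq_zero {n r : ℕ} (A : Matrix (Fin n) (Fin r) ℝ)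
    (hA : (Aᵀ * A).trace = 0) : A = 0 := by
  have h : ∀ i j, A i j = 0 := by
    have : ∑ j, ∑ i, A i j * A i j = 0 := by
      simpa [Matrix.trace, Matrix.mul_apply, Matrix.diag] using hA
    intro i j
    have h1 : ∀ j ∈ Finset.univ, (0:ℝ) ≤ ∑ i, A i j * A i j :=
      fun j _ => Finset.sum_nonneg fun i _ => mul_self_nonneg _
    have h2 := (Finset.sum_eq_zero_iff_of_nonneg h1).mp this j (Finset.mem_univ j)
    have h3 := (Finset.sum_eq_zero_iff_of_nonneg
      (fun i _ => mul_self_nonneg (A i j))).mp h2 i (Finset.mem_univ i)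
    exact mul_self_eq_zero.mp h3
  ext i j; exact h i j

/-- A point `(X,G) ∈ M_h` with representation `(H,V)` is a
first-order stationary point of `min_{(X,G) ∈ M_h} f(φ(X,G))` — i.e. the differential
of `f ∘ φ` vanishes on the whole tangent space — iff `∇f(X) V ∈ N_H Hʳ` and
`G ∇f(X)ᵀ H = 0`. -/
theorem first_order_stationarity_Mh {m n q r : ℕ} (hrm : r ≤ m) (hrn : r ≤ n)
    (h : Matrix (Fin m) (Fin n) ℝ → (Fin q → ℝ))
    (hsmooth : ContDiff ℝ (⊤ : ℕ∞) h)
    (hinv : ∀ (X : Matrix (Fin m) (Fin n) ℝ) (Q : Matrix (Fin n) (Fin n) ℝ),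
      Qᵀ * Q = 1 → h (X * Q) = h X)
    (hfullrank : ∀ X : Matrix (Fin m) (Fin n) ℝ, h X = 0 →
      Function.Surjective (fderiv ℝ h X))
    (f : Matrix (Fin m) (Fin n) ℝ → ℝ) (hf : ContDiff ℝ 2 f)
    (X : Matrix (Fin m) (Fin n) ℝ) (G : Matrix (Fin n) (Fin n) ℝ)
    (H : Matrix (Fin m) (Fin r) ℝ) (V : Matrix (Fin n) (Fin r) ℝ)
    (hX : h X = 0) (hXG : X * G = 0) (hGsym : Gᵀ = G) (hGproj : G * G = G)
    (hGrank : G.rank = n - r)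
    (hV : Vᵀ * V = 1) (hrep : X = H * Vᵀ) (hG : G = 1 - V * Vᵀ)
    (Gf : Matrix (Fin m) (Fin n) ℝ)   -- the Euclidean gradient ∇f(X)
    (hGf : ∀ Z : Matrix (Fin m) (Fin n) ℝ, fderiv ℝ f X Z = (Gfᵀ * Z).trace) :
    -- first-order stationarity: `D(f∘φ)` vanishes on `T_{(X,G)} M_h` …
    ((∀ (K : Matrix (Fin m) (Fin r) ℝ) (Vp : Matrix (Fin n) (Fin r) ℝ),
        K ∈ LinearMap.ker ((fderiv ℝ (fun H' => h (pad r n H')) H :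
          Matrix (Fin m) (Fin r) ℝ →ₗ[ℝ] (Fin q → ℝ))) →
        Vᵀ * Vp = 0 →
        (Gfᵀ * (K * Vᵀ + H * Vpᵀ)).trace = 0)
      ↔
    -- … iff `∇f(X) V ∈ N_H Hʳ` and `G ∇f(X)ᵀ H = 0`:
      ((∀ K ∈ LinearMap.ker ((fderiv ℝ (fun H' => h (pad r n H')) H :
            Matrix (Fin m) (Fin r) ℝ →ₗ[ℝ] (Fin q → ℝ))),
          (Kᵀ * (Gf * V)).trace = 0) ∧
        G * Gfᵀ * H = 0)) := by
  constructor
  · intro hst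
    constructor
    · intro K hK
      have h0 := hst K 0 hK (by simp)
      have : (Gfᵀ * (K * Vᵀ + H * (0:Matrix (Fin n) (Fin r) ℝ)ᵀ)).trace
          = (Kᵀ * (Gf * V)).trace := by
        simp only [Matrix.transpose_zero, Matrix.mul_zero, add_zero]
        rw [show Gfᵀ * (K * Vᵀ) = (Gfᵀ * K) * Vᵀ by rw [Matrix.mul_assoc],
          Matrix.trace_mul_comm, ← Matrix.trace_transpose]
        simp [Matrix.transpose_mul, Matrix.mul_assoc, Matrix.trace_mul_comm (Kᵀ * Gf) V]
      rw [this] at h0; exact h0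
    · set Vp := G * Gfᵀ * H with hVpdef
      have hVG : Vᵀ * G = 0 := by
        rw [hG, Matrix.mul_sub, Matrix.mul_one, ← Matrix.mul_assoc, hV, Matrix.one_mul,
          sub_self]
      have hVVp : Vᵀ * Vp = 0 := by
        rw [hVpdef, ← Matrix.mul_assoc, ← Matrix.mul_assoc, hVG, Matrix.zero_mul,
          Matrix.zero_mul]
      have hker0 : (0:Matrix (Fin m) (Fin r) ℝ) ∈
          LinearMap.ker ((fderiv ℝ (fun H' => h (pad r n H')) H :
            Matrix (Fin m) (Fin r) ℝ →ₗ[ℝ] (Fin q → ℝ))) :=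
        LinearMap.mem_ker.mpr (map_zero _)
      have h0 := hst 0 Vp hker0 hVVp
      have htr : (Vpᵀ * Vp).trace = 0 := by
        have hGVp : G * Vp = Vp := by
          rw [hVpdef, ← Matrix.mul_assoc, ← Matrix.mul_assoc, hGproj]
        have hVpG : Vpᵀ * G = Vpᵀ := by
          rw [← hGsym, ← Matrix.transpose_mul, hGVp]
        have : Vpᵀ * Vp = Vpᵀ * Gfᵀ * H := by
          rw [hVpdef]
          rw [show Vpᵀ * (G * Gfᵀ * H) = (Vpᵀ * G) * Gfᵀ * H by
            simp [Matrix.mul_assoc], hVpG]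
        rw [this]
        have := h0
        simp only [Matrix.zero_mul, zero_add] at this
        rw [show Gfᵀ * (H * Vpᵀ) = (Gfᵀ * H) * Vpᵀ by rw [Matrix.mul_assoc]] at this
        rw [Matrix.trace_mul_comm] at this
        rw [show Vpᵀ * Gfᵀ * H = Vpᵀ * (Gfᵀ * H) by rw [Matrix.mul_assoc]]
        exact this
      have : Vp = 0 := trace_transpose_mul_self_eq_zero Vp htr
      rw [hVpdef] at this; exact this
  · rintro ⟨h1, h2⟩ K Vp hK hVVp
    rw [Matrix.mul_add, Matrix.trace_add]
    have e1 : (Gfᵀ * (K * Vᵀ)).trace = (Kᵀ * (Gf * V)).trace := by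
      rw [show Gfᵀ * (K * Vᵀ) = (Gfᵀ * K) * Vᵀ by rw [Matrix.mul_assoc],
        Matrix.trace_mul_comm, ← Matrix.trace_transpose]
      simp [Matrix.transpose_mul, Matrix.mul_assoc, Matrix.trace_mul_comm (Kᵀ * Gf) V]
    have e2 : (Gfᵀ * (H * Vpᵀ)).trace = 0 := by
      have hGfH : Gfᵀ * H = V * (Vᵀ * (Gfᵀ * H)) := by
        have : (1 - V * Vᵀ) * (Gfᵀ * H) = 0 := by
          rw [show (1 - V * Vᵀ) * (Gfᵀ * H) = G * Gfᵀ * H by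
            rw [← hG, Matrix.mul_assoc]]
          exact h2
        have := sub_eq_zero.mp (by
          rw [Matrix.sub_mul, Matrix.one_mul] at this
          exact this)
        rw [Matrix.mul_assoc] at this
        exact this
      rw [show Gfᵀ * (H * Vpᵀ) = (Gfᵀ * H) * Vpᵀ by rw [Matrix.mul_assoc],
        Matrix.trace_mul_comm, hGfH]
      rw [show Vpᵀ * (V * (Vᵀ * (Gfᵀ * H))) = (Vpᵀ * V) * (Vᵀ * (Gfᵀ * H)) by
        rw [Matrix.mul_assoc]]
      have : Vpᵀ * V = 0 := by
        have := congrArg Matrix.transpose hVVp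
        simpa [Matrix.transpose_mul] using this
      rw [this, Matrix.zero_mul, Matrix.trace_zero]
    rw [e1, e2, h1 K hK, add_zero]
end
end
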